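/- For all formulas φ and ψ, φ ≡ ψ if and only if the graphs [φ] and [ψ] are isomorphic. -/

import Mathlib

namespace GSP

/-- Atoms: a propositional variable (coded by a natural number) with a polarity. -/
abbrev Atom := ℕ × Bool

/-- The dual atom. -/
def dualAtom (a : Atom) : Atom := (a.1, !a.2)

/-- A finite, simple, undirected graph whose vertices are labelled by atoms. -/
structure LGraph where
  V : Type
  [fintype : Fintype V]
  adj : V → V → Prop
  symm : ∀ {v w : V}, adj v w → adj w v
  irrefl : ∀ v : V, ¬ adj v v
  label : V → Atom

attribute [instance] LGraph.fintype

namespace LGraph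

/-- An isomorphism of labelled graphs: a vertex bijection preserving labels and
preserving and reflecting edges. -/
structure Iso (G H : LGraph) where
  toEquiv : G.V ≃ H.V
  adj_iff : ∀ v w : G.V, G.adj v w ↔ H.adj (toEquiv v) (toEquiv w)
  label_eq : ∀ v : G.V, H.label (toEquiv v) = G.label v

/-- `G ≅ H` : the graphs `G` and `H` are isomorphic. -/
def iso (G H : LGraph) : Prop := Nonempty (Iso G H)

/-- The empty graph. -/
def empty : LGraph where
  V := Empty
  adj _ _ := False
  symm h := h.elim
  irrefl v := v.elim
  label v := v.elim

/-- The single-vertex graph labelled by the atom `a`. -/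
def single (a : Atom) : LGraph where
  V := Unit
  adj _ _ := False
  symm h := h.elim
  irrefl _ h := h
  label _ := a

def parAdj (G H : LGraph) : G.V ⊕ H.V → G.V ⊕ H.V → Prop
  | .inl a, .inl b => G.adj a b
  | .inr a, .inr b => H.adj a b
  | _, _ => False

/-- The par `G ⅋ H` : disjoint union of `G` and `H`. -/
def par (G H : LGraph) : LGraph where
  V := G.V ⊕ H.V
  adj := parAdj G H
  symm := by
    rintro (a | a) (b | b) h
    · exact G.symm h
    · exact h.elim
    · exact h.elim
    · exact H.symm h
  irrefl := by
    rintro (a | a) h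
    · exact G.irrefl a h
    · exact H.irrefl a h
  label := Sum.elim G.label H.label

def tensorAdj (G H : LGraph) : G.V ⊕ H.V → G.V ⊕ H.V → Prop
  | .inl a, .inl b => G.adj a b
  | .inr a, .inr b => H.adj a b
  | .inl _, .inr _ => True
  | .inr _, .inl _ => True

/-- The tensor `G ⊗ H` : join of `G` and `H` (disjoint union plus all edges in between). -/
def tensor (G H : LGraph) : LGraph where
  V := G.V ⊕ H.V
  adj := tensorAdj G H
  symm := by
    rintro (a | a) (b | b) h
    · exact G.symm h
    · exact trivial
    · exact trivial
    · exact H.symm h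
  irrefl := by
    rintro (a | a) h
    · exact G.irrefl a h
    · exact H.irrefl a h
  label := Sum.elim G.label H.label

/-- The dual graph `Ḡ` : same vertices, complemented edges, dualized labels. -/
def dual (G : LGraph) : LGraph where
  V := G.V
  adj v w := v ≠ w ∧ ¬ G.adj v w
  symm h := ⟨fun e => h.1 e.symm, fun h' => h.2 (G.symm h')⟩
  irrefl _ h := h.1 rfl
  label v := dualAtom (G.label v)

def plugAdj (C : LGraph) (R : Set C.V) (X : LGraph) : C.V ⊕ X.V → C.V ⊕ X.V → Prop
  | .inl a, .inl b => C.adj a b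
  | .inr a, .inr b => X.adj a b
  | .inl a, .inr _ => a ∈ R
  | .inr _, .inl b => b ∈ R

/-- `C[X]_R` : the graph obtained from the context `C[·]_R` by inserting the graph `X`
as a module whose vertices are adjacent exactly to the vertices in `R`. -/
def plug (C : LGraph) (R : Set C.V) (X : LGraph) : LGraph where
  V := C.V ⊕ X.V
  adj := plugAdj C R X
  symm := by
    rintro (a | a) (b | b) h
    · exact C.symm h
    · exact h
    · exact h
    · exact X.symm h
  irrefl := by
    rintro (a | a) h
    · exact C.irrefl a h
    · exact X.irrefl a h
  label := Sum.elim C.label X.label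

def compAdj (G : LGraph) (H : G.V → LGraph) :
    (Σ v : G.V, (H v).V) → (Σ v : G.V, (H v).V) → Prop := fun x y =>
  (∃ (v : G.V) (a b : (H v).V), x = ⟨v, a⟩ ∧ y = ⟨v, b⟩ ∧ (H v).adj a b) ∨
    (x.1 ≠ y.1 ∧ G.adj x.1 y.1)

/-- The composition `G⟨H v₁, …, H vₙ⟩` of the family `H` via the graph `G`:
replace each vertex `v` of `G` by the graph `H v`. -/
def comp (G : LGraph) (H : G.V → LGraph) : LGraph where
  V := Σ v : G.V, (H v).V
  adj := compAdj G H
  symm := by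
    rintro x y (⟨v, a, b, hx, hy, hab⟩ | ⟨hne, hadj⟩)
    · exact Or.inl ⟨v, b, a, hy, hx, (H v).symm hab⟩
    · exact Or.inr ⟨hne.symm, G.symm hadj⟩
  irrefl := by
    rintro ⟨v, a⟩ (⟨w, x, y, hx, hy, hxy⟩ | ⟨hne, _⟩)
    · have h := hx.symm.trans hy
      obtain rfl : x = y := by simpa using h
      exact (H w).irrefl x hxy
    · exact hne rfl
  label x := (H x.1).label x.2

/-- A module of `G` : a set `M` of vertices such that every vertex outside `M`
is adjacent either to all vertices of `M` or to none of them. -/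
def IsModule (G : LGraph) (M : Set G.V) : Prop :=
  ∀ v ∉ M, ∀ x ∈ M, ∀ y ∈ M, (G.adj v x ↔ G.adj v y)

/-- A prime graph: at least 2 vertices and only trivial modules. -/
def Prime (G : LGraph) : Prop :=
  2 ≤ Fintype.card G.V ∧
    ∀ M : Set G.V, G.IsModule M → M = ∅ ∨ (∃ v, M = {v}) ∨ M = Set.univ

/-- `G` is `P₄`-free: no four distinct vertices induce a path on 4 vertices. -/
def P4Free (G : LGraph) : Prop :=
  ¬ ∃ v₁ v₂ v₃ v₄ : G.V,
      v₁ ≠ v₂ ∧ v₁ ≠ v₃ ∧ v₁ ≠ v₄ ∧ v₂ ≠ v₃ ∧ v₂ ≠ v₄ ∧ v₃ ≠ v₄ ∧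
      G.adj v₁ v₂ ∧ G.adj v₂ v₃ ∧ G.adj v₃ v₄ ∧
      ¬ G.adj v₁ v₃ ∧ ¬ G.adj v₁ v₄ ∧ ¬ G.adj v₂ v₄

end LGraph

open LGraph

/-- The `n`-fold tensor `X₁ ⊗ ⋯ ⊗ Xₙ`. -/
def bigTensor : (n : ℕ) → (Fin n → LGraph) → LGraph
  | 0, _ => LGraph.empty
  | n + 1, F => (F 0).tensor (bigTensor n fun i => F i.succ)

/-- The `n`-fold par `X₁ ⅋ ⋯ ⅋ Xₙ`. -/
def bigPar : (n : ℕ) → (Fin n → LGraph) → LGraph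
  | 0, _ => LGraph.empty
  | n + 1, F => (F 0).par (bigPar n fun i => F i.succ)

/-- The inference rules of system GS (premise, conclusion). -/
inductive GSRule : LGraph → LGraph → Prop
  /-- ai↓ : premise `∅`, conclusion `ā ⅋ a`. -/
  | ai (a : Atom) : GSRule LGraph.empty ((single (dualAtom a)).par (single a))
  /-- ss↓ : premise `B[A]_S`, conclusion `B ⅋ A`, for `A ≠ ∅` and `S ≠ ∅`. -/
  | ss (A B : LGraph) (S : Set B.V) :
      Nonempty A.V → S ≠ ∅ → GSRule (B.plug S A) (B.par A)
  /-- p↓ : premise `(M₁ ⅋ N₁) ⊗ ⋯ ⊗ (Mₙ ⅋ Nₙ)`, conclusion `P̄⟨M₁,…,Mₙ⟩ ⅋ P⟨N₁,…,Nₙ⟩`,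
  for `P` prime with `n = |V(P)| ≥ 4` and all `Mᵢ ≠ ∅`. -/
  | p (n : ℕ) (P : LGraph) (e : P.V ≃ Fin n) (M N : Fin n → LGraph) :
      P.Prime → 4 ≤ n → (∀ i, Nonempty (M i).V) →
      GSRule (bigTensor n fun i => (M i).par (N i))
        ((P.dual.comp fun v => M (e v)).par (P.comp fun v => N (e v)))

/-- The "up" rules ai↑, ss↑, p↑ (premise, conclusion). -/
inductive UpRule : LGraph → LGraph → Prop
  /-- ai↑ : premise `a ⊗ ā`, conclusion `∅`. -/
  | ai (a : Atom) : UpRule ((single a).tensor (single (dualAtom a))) LGraph.empty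
  /-- ss↑ : premise `B ⊗ A`, conclusion `B[A]_S`, for `A ≠ ∅` and `S ≠ V(B)`. -/
  | ss (A B : LGraph) (S : Set B.V) :
      Nonempty A.V → S ≠ Set.univ → UpRule (B.tensor A) (B.plug S A)
  /-- p↑ : premise `P⟨M₁,…,Mₙ⟩ ⊗ P̄⟨N₁,…,Nₙ⟩`, conclusion `(M₁ ⊗ N₁) ⅋ ⋯ ⅋ (Mₙ ⊗ Nₙ)`,
  for `P` prime with `n = |V(P)| ≥ 4` and all `Mᵢ ≠ ∅`. -/
  | p (n : ℕ) (P : LGraph) (e : P.V ≃ Fin n) (M N : Fin n → LGraph) :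
      P.Prime → 4 ≤ n → (∀ i, Nonempty (M i).V) →
      UpRule ((P.comp fun v => M (e v)).tensor (P.dual.comp fun v => N (e v)))
        (bigPar n fun i => (M i).tensor (N i))

/-- The rules of system SGS : the rules of GS together with their duals. -/
def SGSRule (G H : LGraph) : Prop := GSRule G H ∨ UpRule G H

/-- A single inference step in a system: inside some context, replace a module
isomorphic to the premise of a rule by the corresponding conclusion. -/
def Step (Rules : LGraph → LGraph → Prop) (G H : LGraph) : Prop :=
  ∃ (C : LGraph) (R : Set C.V) (p c : LGraph),
    Rules p c ∧ G.iso (C.plug R p) ∧ H.iso (C.plug R c)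

/-- A derivation in a system from `G` to `H` : a finite sequence of inference steps
and isomorphisms leading from `G` to `H`. -/
def Deriv (Rules : LGraph → LGraph → Prop) (G H : LGraph) : Prop :=
  Relation.ReflTransGen (fun X Y => X.iso Y ∨ Step Rules X Y) G H

/-- A graph is provable in a system if there is a derivation from `∅` to it. -/
def Provable (Rules : LGraph → LGraph → Prop) (G : LGraph) : Prop :=
  Deriv Rules LGraph.empty G

/-- Formulas: unit, positive and negative atoms, par and tensor. -/
inductive Formula where
  | unit : Formula
  | pos (a : ℕ) : Formula
  | neg (a : ℕ) : Formula
  | par (φ ψ : Formula) : Formula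
  | tens (φ ψ : Formula) : Formula

/-- The graph `[φ]` of a formula `φ`. -/
def Formula.graph : Formula → LGraph
  | .unit => LGraph.empty
  | .pos a => single (a, true)
  | .neg a => single (a, false)
  | .par φ ψ => φ.graph.par ψ.graph
  | .tens φ ψ => φ.graph.tensor ψ.graph

/-- Structural equivalence of formulas: the smallest congruence making `⅋` and `⊗`
associative and commutative with unit `∘`. -/
inductive Formula.equiv : Formula → Formula → Prop
  | refl (φ) : Formula.equiv φ φ
  | symm {φ ψ} : Formula.equiv φ ψ → Formula.equiv ψ φ
  | trans {φ ψ χ} : Formula.equiv φ ψ → Formula.equiv ψ χ → Formula.equiv φ χ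
  | parComm (φ ψ) : Formula.equiv (.par φ ψ) (.par ψ φ)
  | parAssoc (φ ψ χ) : Formula.equiv (.par φ (.par ψ χ)) (.par (.par φ ψ) χ)
  | parUnit (φ) : Formula.equiv (.par φ .unit) φ
  | tensComm (φ ψ) : Formula.equiv (.tens φ ψ) (.tens ψ φ)
  | tensAssoc (φ ψ χ) : Formula.equiv (.tens φ (.tens ψ χ)) (.tens (.tens φ ψ) χ)
  | tensUnit (φ) : Formula.equiv (.tens φ .unit) φ
  | parCongr {φ φ' ψ ψ'} : Formula.equiv φ φ' → Formula.equiv ψ ψ' →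
      Formula.equiv (.par φ ψ) (.par φ' ψ')
  | tensCongr {φ φ' ψ ψ'} : Formula.equiv φ φ' → Formula.equiv ψ ψ' →
      Formula.equiv (.tens φ ψ) (.tens φ' ψ')

/-- A formula is unit-free if it contains no occurrence of the unit `∘`. -/
def Formula.UnitFree : Formula → Prop
  | .unit => False
  | .pos _ => True
  | .neg _ => True
  | .par φ ψ => φ.UnitFree ∧ ψ.UnitFree
  | .tens φ ψ => φ.UnitFree ∧ ψ.UnitFree

/-- The sequent calculus MLL° (multiplicative linear logic with mix) on multisets
of formulas. -/
inductive MLL : Multiset Formula → Prop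
  | ax (a : ℕ) : MLL {Formula.pos a, Formula.neg a}
  | tens {Γ Δ : Multiset Formula} (φ ψ : Formula) :
      MLL (φ ::ₘ Γ) → MLL (ψ ::ₘ Δ) → MLL (Formula.tens φ ψ ::ₘ (Γ + Δ))
  | par {Γ : Multiset Formula} (φ ψ : Formula) :
      MLL (φ ::ₘ ψ ::ₘ Γ) → MLL (Formula.par φ ψ ::ₘ Γ)
  | mix {Γ Δ : Multiset Formula} : MLL Γ → MLL Δ → MLL (Γ + Δ)

/-!
Associativity, commutativity and the unit laws of `⅋` and `⊗` hold up to isomorphism of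
graphs, which gives the forward direction. Conversely, both formulas may be taken unit-free
(the unit is the only formula with the empty graph). The par-components of a unit-free formula
are atoms or tensors of nonempty graphs, hence have connected graphs, and an isomorphism of
the disjoint unions matches them pairwise, since it maps connected components onto connected
components; induction on the size then settles a par. A tensor is turned into a par by
complementing the graph, which corresponds to linear negation of the formula.
-/

namespace LGraph

variable {G G' H H' K : LGraph}

namespace Iso

def refl (G : LGraph) : Iso G G := ⟨Equiv.refl _, fun _ _ => Iff.rfl, fun _ => rfl⟩

def symm (f : Iso G H) : Iso H G where
  toEquiv := f.toEquiv.symm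
  adj_iff v w := by simpa using (f.adj_iff (f.toEquiv.symm v) (f.toEquiv.symm w)).symm
  label_eq v := by simpa using (f.label_eq (f.toEquiv.symm v)).symm

def trans (f : Iso G H) (g : Iso H K) : Iso G K where
  toEquiv := f.toEquiv.trans g.toEquiv
  adj_iff v w := (f.adj_iff v w).trans (g.adj_iff _ _)
  label_eq v := (g.label_eq _).trans (f.label_eq v)

def parCongr (f : Iso G G') (g : Iso H H') : Iso (G.par H) (G'.par H') where
  toEquiv := f.toEquiv.sumCongr g.toEquiv
  adj_iff := by rintro (v | v) (w | w); exacts [f.adj_iff v w, Iff.rfl, Iff.rfl, g.adj_iff v w]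
  label_eq := by rintro (v | v); exacts [f.label_eq v, g.label_eq v]

def tensorCongr (f : Iso G G') (g : Iso H H') : Iso (G.tensor H) (G'.tensor H') where
  toEquiv := f.toEquiv.sumCongr g.toEquiv
  adj_iff := by rintro (v | v) (w | w); exacts [f.adj_iff v w, Iff.rfl, Iff.rfl, g.adj_iff v w]
  label_eq := by rintro (v | v); exacts [f.label_eq v, g.label_eq v]

def parComm (G H : LGraph) : Iso (G.par H) (H.par G) where
  toEquiv := Equiv.sumComm _ _
  adj_iff := by rintro (v | v) (w | w) <;> rfl
  label_eq := by rintro (v | v) <;> rfl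

def tensorComm (G H : LGraph) : Iso (G.tensor H) (H.tensor G) where
  toEquiv := Equiv.sumComm _ _
  adj_iff := by rintro (v | v) (w | w) <;> rfl
  label_eq := by rintro (v | v) <;> rfl

def parAssoc (G H K : LGraph) : Iso (G.par (H.par K)) ((G.par H).par K) where
  toEquiv := (Equiv.sumAssoc _ _ _).symm
  adj_iff := by rintro (v | v | v) (w | w | w) <;> rfl
  label_eq := by rintro (v | v | v) <;> rfl

def tensorAssoc (G H K : LGraph) : Iso (G.tensor (H.tensor K)) ((G.tensor H).tensor K) where
  toEquiv := (Equiv.sumAssoc _ _ _).symm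
  adj_iff := by rintro (v | v | v) (w | w | w) <;> rfl
  label_eq := by rintro (v | v | v) <;> rfl

def parEmpty (G : LGraph) : Iso (G.par empty) G where
  toEquiv := Equiv.sumEmpty G.V Empty
  adj_iff := by rintro (v | ⟨⟨⟩⟩) (w | ⟨⟨⟩⟩); rfl
  label_eq := by rintro (v | ⟨⟨⟩⟩); rfl

def tensorEmpty (G : LGraph) : Iso (G.tensor empty) G where
  toEquiv := Equiv.sumEmpty G.V Empty
  adj_iff := by rintro (v | ⟨⟨⟩⟩) (w | ⟨⟨⟩⟩); rfl
  label_eq := by rintro (v | ⟨⟨⟩⟩); rfl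

def parLeftComm (G H K : LGraph) : Iso (G.par (H.par K)) (H.par (G.par K)) :=
  (parAssoc G H K).trans (((parComm G H).parCongr (refl K)).trans (parAssoc H G K).symm)

def dualCongr (f : Iso G H) : Iso G.dual H.dual where
  toEquiv := f.toEquiv
  adj_iff v w := and_congr f.toEquiv.injective.ne_iff.symm (not_congr (f.adj_iff v w))
  label_eq v := congrArg dualAtom (f.label_eq v)

def dualPar (G H : LGraph) : Iso (G.par H).dual (G.dual.tensor H.dual) where
  toEquiv := Equiv.refl _
  adj_iff := by
    rintro (v | v) (w | w)
    exacts [and_congr Sum.inl_injective.ne_iff Iff.rfl,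
      iff_of_true ⟨Sum.inl_ne_inr, id⟩ trivial, iff_of_true ⟨Sum.inr_ne_inl, id⟩ trivial,
      and_congr Sum.inr_injective.ne_iff Iff.rfl]
  label_eq := by rintro (v | v) <;> rfl

def dualTensor (G H : LGraph) : Iso (G.tensor H).dual (G.dual.par H.dual) where
  toEquiv := Equiv.refl _
  adj_iff := by
    rintro (v | v) (w | w)
    exacts [and_congr Sum.inl_injective.ne_iff Iff.rfl, iff_of_false (fun h => h.2 trivial) id,
      iff_of_false (fun h => h.2 trivial) id, and_congr Sum.inr_injective.ne_iff Iff.rfl]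
  label_eq := by rintro (v | v) <;> rfl

def dualEmpty : Iso empty.dual empty := ⟨Equiv.refl _, nofun, nofun⟩

def dualSingle (a : Atom) : Iso (single a).dual (single (dualAtom a)) where
  toEquiv := Equiv.refl _
  adj_iff _ _ := iff_false_intro fun h => h.1 rfl
  label_eq _ := rfl

end Iso

theorem iso.refl (G : LGraph) : G.iso G := ⟨Iso.refl G⟩

theorem iso.symm : G.iso H → H.iso G := fun ⟨f⟩ => ⟨f.symm⟩

theorem iso.trans : G.iso H → H.iso K → G.iso K := fun ⟨f⟩ ⟨g⟩ => ⟨f.trans g⟩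

theorem iso.par : G.iso G' → H.iso H' → (G.par H).iso (G'.par H') :=
  fun ⟨f⟩ ⟨g⟩ => ⟨f.parCongr g⟩

theorem iso.tensor : G.iso G' → H.iso H' → (G.tensor H).iso (G'.tensor H') :=
  fun ⟨f⟩ ⟨g⟩ => ⟨f.tensorCongr g⟩

theorem iso.dual : G.iso H → G.dual.iso H.dual := fun ⟨f⟩ => ⟨f.dualCongr⟩

def Reach (G : LGraph) : G.V → G.V → Prop := Relation.ReflTransGen G.adj

def Connected (G : LGraph) : Prop := Nonempty G.V ∧ ∀ v w : G.V, G.Reach v w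

theorem Iso.reach (f : Iso G H) {v w : G.V} (h : G.Reach v w) :
    H.Reach (f.toEquiv v) (f.toEquiv w) :=
  h.lift f.toEquiv fun a b hab => (f.adj_iff a b).mp hab

theorem Iso.reach_iff (f : Iso G H) {v w : G.V} :
    H.Reach (f.toEquiv v) (f.toEquiv w) ↔ G.Reach v w :=
  ⟨fun h => by simpa [Iso.symm] using f.symm.reach h, f.reach⟩

theorem Reach.symm {v w : G.V} (h : G.Reach v w) : G.Reach w v := by
  induction h with
  | refl => exact .refl
  | tail _ hab ih => exact .head (G.symm hab) ih

theorem connected_of_forall_reach (v₀ : G.V) (h : ∀ v, G.Reach v v₀) : G.Connected :=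
  ⟨⟨v₀⟩, fun v w => (h v).trans (h w).symm⟩

theorem connected_single (a : Atom) : (single a).Connected :=
  connected_of_forall_reach () fun _ => .refl

theorem connected_tensor [Nonempty G.V] [Nonempty H.V] : (G.tensor H).Connected := by
  let v₀ : G.V := Classical.arbitrary _
  let w₀ : H.V := Classical.arbitrary _
  refine connected_of_forall_reach (.inl v₀) ?_
  rintro (v | w)
  · exact .head (show (G.tensor H).adj (.inl v) (.inr w₀) from trivial) (.single trivial)
  · exact .single (show (G.tensor H).adj (.inr w) (.inl v₀) from trivial)

theorem par_adj_isLeft {x y : (G.par H).V} (h : (G.par H).adj x y) : x.isLeft = y.isLeft := by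
  rcases x with x | x <;> rcases y with y | y <;> first | rfl | exact h.elim

theorem Reach.par_isLeft {x y : (G.par H).V} (h : (G.par H).Reach x y) :
    x.isLeft = y.isLeft := by
  induction h with
  | refl => rfl
  | tail _ hyz ih => exact ih.trans (par_adj_isLeft hyz)

theorem Connected.par_reach_iff (hG : G.Connected) (v : G.V) (x : (G.par H).V) :
    (G.par H).Reach (.inl v) x ↔ x.isLeft := by
  refine ⟨fun h => h.par_isLeft.symm, ?_⟩
  rcases x with w | w
  · exact fun _ => Relation.ReflTransGen.lift (r := G.adj) (p := (G.par H).adj) Sum.inl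
      (fun _ _ h => h) _ _ (hG.2 v w)
  · nofun

def Iso.parLeft (f : Iso (G.par H) (G'.par H')) (hf : ∀ x, (f.toEquiv x).isLeft = x.isLeft) :
    Iso G G' :=
  let e : G.V ≃ G'.V := Equiv.sumIsLeft.symm.trans
    ((f.toEquiv.subtypeEquiv fun x => by rw [hf]).trans Equiv.sumIsLeft)
  have he : ∀ v, f.toEquiv (.inl v) = .inl (e v) := fun v => (Sum.inl_getLeft _ _).symm
  { toEquiv := e
    adj_iff := fun v w => by
      have := f.adj_iff (.inl v) (.inl w)
      rwa [he, he] at this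
    label_eq := fun v => by
      have := f.label_eq (.inl v)
      rwa [he] at this }

theorem Iso.iso_of_par_of_isLeft (f : Iso (G.par H) (G'.par H'))
    (hf : ∀ x, (f.toEquiv x).isLeft = x.isLeft) : G.iso G' ∧ H.iso H' :=
  ⟨⟨f.parLeft hf⟩, ⟨((parComm H G).trans (f.trans (parComm G' H'))).parLeft fun x => by
    show (Sum.swap (f.toEquiv x.swap)).isLeft = x.isLeft
    exact (Sum.isLeft_swap _).trans <| (Sum.bnot_isLeft _).symm.trans <|
      (congrArg not ((hf x.swap).trans (Sum.isLeft_swap x))).trans (Sum.bnot_isRight x)⟩⟩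

theorem Iso.iso_of_par_of_connected (hG : G.Connected) (hG' : G'.Connected)
    (f : Iso (G.par H) (G'.par H')) {v : G.V} (hv : (f.toEquiv (.inl v)).isLeft) :
    G.iso G' ∧ H.iso H' := by
  obtain ⟨v', hv'⟩ := Sum.isLeft_iff.mp hv
  -- on both sides the left summand is the set of vertices reachable from `inl v`, resp. `inl v'`
  refine f.iso_of_par_of_isLeft fun x => Bool.eq_iff_iff.mpr ?_
  have hreach := f.reach_iff (v := .inl v) (w := x)
  rw [hv'] at hreach
  exact (hG'.par_reach_iff v' _).symm.trans (hreach.trans (hG.par_reach_iff v x))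

end LGraph

namespace Formula

theorem equiv.graph_iso {φ ψ : Formula} (h : φ.equiv ψ) : φ.graph.iso ψ.graph := by
  induction h with
  | refl φ => exact .refl _
  | symm _ ih => exact ih.symm
  | trans _ _ ih₁ ih₂ => exact ih₁.trans ih₂
  | parComm => exact ⟨.parComm _ _⟩
  | parAssoc => exact ⟨.parAssoc _ _ _⟩
  | parUnit => exact ⟨.parEmpty _⟩
  | tensComm => exact ⟨.tensorComm _ _⟩
  | tensAssoc => exact ⟨.tensorAssoc _ _ _⟩
  | tensUnit => exact ⟨.tensorEmpty _⟩
  | parCongr _ _ ih₁ ih₂ => exact ih₁.par ih₂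
  | tensCongr _ _ ih₁ ih₂ => exact ih₁.tensor ih₂

theorem equiv.parUnitLeft (φ : Formula) : (par unit φ).equiv φ :=
  (parComm _ _).trans (parUnit _)

theorem equiv.tensUnitLeft (φ : Formula) : (tens unit φ).equiv φ :=
  (tensComm _ _).trans (tensUnit _)

theorem equiv_unit_or_exists_unitFree :
    ∀ φ : Formula, φ.equiv unit ∨ ∃ φ', φ'.UnitFree ∧ φ.equiv φ'
  | unit => .inl (.refl _)
  | pos a => .inr ⟨pos a, trivial, .refl _⟩
  | neg a => .inr ⟨neg a, trivial, .refl _⟩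
  | par φ ψ => by
    rcases equiv_unit_or_exists_unitFree φ with hφ | ⟨φ', uφ, hφ⟩ <;>
      rcases equiv_unit_or_exists_unitFree ψ with hψ | ⟨ψ', uψ, hψ⟩
    · exact .inl ((hφ.parCongr hψ).trans (.parUnit _))
    · exact .inr ⟨ψ', uψ, (hφ.parCongr hψ).trans (.parUnitLeft _)⟩
    · exact .inr ⟨φ', uφ, (hφ.parCongr hψ).trans (.parUnit _)⟩
    · exact .inr ⟨par φ' ψ', ⟨uφ, uψ⟩, hφ.parCongr hψ⟩
  | tens φ ψ => by
    rcases equiv_unit_or_exists_unitFree φ with hφ | ⟨φ', uφ, hφ⟩ <;>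
      rcases equiv_unit_or_exists_unitFree ψ with hψ | ⟨ψ', uψ, hψ⟩
    · exact .inl ((hφ.tensCongr hψ).trans (.tensUnit _))
    · exact .inr ⟨ψ', uψ, (hφ.tensCongr hψ).trans (.tensUnitLeft _)⟩
    · exact .inr ⟨φ', uφ, (hφ.tensCongr hψ).trans (.tensUnit _)⟩
    · exact .inr ⟨tens φ' ψ', ⟨uφ, uψ⟩, hφ.tensCongr hψ⟩

theorem UnitFree.nonempty_graph : ∀ {φ : Formula}, φ.UnitFree → Nonempty φ.graph.V
  | pos _, _ | neg _, _ => ⟨()⟩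
  | par _ _, h | tens _ _, h => have := h.1.nonempty_graph; ⟨.inl (Classical.arbitrary _)⟩

theorem UnitFree.not_empty_iso {φ : Formula} (hφ : φ.UnitFree) : ¬ LGraph.empty.iso φ.graph :=
  fun ⟨f⟩ => (f.toEquiv.symm hφ.nonempty_graph.some).elim

def size : Formula → ℕ
  | unit | pos _ | neg _ => 1
  | par φ ψ | tens φ ψ => φ.size + ψ.size + 1

theorem size_pos (φ : Formula) : 0 < φ.size := by
  cases φ <;> simp only [size] <;> omega

def dual : Formula → Formula
  | unit => unit
  | pos a => neg a
  | neg a => pos a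
  | par φ ψ => tens φ.dual ψ.dual
  | tens φ ψ => par φ.dual ψ.dual

theorem dual_dual : ∀ φ : Formula, φ.dual.dual = φ
  | unit | pos _ | neg _ => rfl
  | par φ ψ | tens φ ψ => by simp only [dual, dual_dual φ, dual_dual ψ]

theorem size_dual : ∀ φ : Formula, φ.dual.size = φ.size
  | unit | pos _ | neg _ => rfl
  | par φ ψ | tens φ ψ => by simp only [dual, size, size_dual φ, size_dual ψ]

theorem UnitFree.dual : ∀ {φ : Formula}, φ.UnitFree → φ.dual.UnitFree
  | pos _, _ | neg _, _ => trivial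
  | par _ _, h | tens _ _, h => ⟨h.1.dual, h.2.dual⟩

theorem equiv.dual {φ ψ : Formula} (h : φ.equiv ψ) : φ.dual.equiv ψ.dual := by
  induction h with
  | refl φ => exact .refl _
  | symm _ ih => exact ih.symm
  | trans _ _ ih₁ ih₂ => exact ih₁.trans ih₂
  | parComm => exact .tensComm _ _
  | parAssoc => exact .tensAssoc _ _ _
  | parUnit => exact .tensUnit _
  | tensComm => exact .parComm _ _
  | tensAssoc => exact .parAssoc _ _ _
  | tensUnit => exact .parUnit _
  | parCongr _ _ ih₁ ih₂ => exact ih₁.tensCongr ih₂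
  | tensCongr _ _ ih₁ ih₂ => exact ih₁.parCongr ih₂

theorem graph_dual : ∀ φ : Formula, φ.dual.graph.iso φ.graph.dual
  | unit => ⟨Iso.dualEmpty.symm⟩
  | pos a => ⟨(Iso.dualSingle (a, true)).symm⟩
  | neg a => ⟨(Iso.dualSingle (a, false)).symm⟩
  | par φ ψ => (φ.graph_dual.tensor ψ.graph_dual).trans ⟨(Iso.dualPar _ _).symm⟩
  | tens φ ψ => (φ.graph_dual.par ψ.graph_dual).trans ⟨(Iso.dualTensor _ _).symm⟩

def listPar : List Formula → Formula
  | [] => unit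
  | φ :: l => par φ (listPar l)

def parts : Formula → List Formula
  | unit => []
  | par φ ψ => φ.parts ++ ψ.parts
  | φ => [φ]

theorem listPar_append (l₁ l₂ : List Formula) :
    (listPar (l₁ ++ l₂)).equiv (par (listPar l₁) (listPar l₂)) := by
  induction l₁ with
  | nil => exact (equiv.parUnitLeft _).symm
  | cons φ l ih => exact ((equiv.refl φ).parCongr ih).trans (.parAssoc _ _ _)

theorem equiv_listPar_parts : ∀ φ : Formula, φ.equiv (listPar φ.parts)
  | unit => .refl _
  | pos _ | neg _ | tens _ _ => (equiv.parUnit _).symm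
  | par φ ψ =>
    (φ.equiv_listPar_parts.parCongr ψ.equiv_listPar_parts).trans (listPar_append _ _).symm

theorem listPar_perm {l l' : List Formula} (h : l.Perm l') : (listPar l).equiv (listPar l') := by
  induction h with
  | nil => exact .refl _
  | cons φ _ ih => exact (equiv.refl φ).parCongr ih
  | swap φ ψ l =>
    exact (equiv.parAssoc _ _ _).trans
      (((equiv.parComm ψ φ).parCongr (.refl _)).trans (equiv.parAssoc _ _ _).symm)
  | trans _ _ ih₁ ih₂ => exact ih₁.trans ih₂

theorem UnitFree.of_mem_parts {x : Formula} :
    ∀ {φ : Formula}, φ.UnitFree → x ∈ φ.parts → x.UnitFree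
  | pos _, h, hx | neg _, h, hx | tens _ _, h, hx => List.mem_singleton.mp hx ▸ h
  | par _ _, h, hx => (List.mem_append.mp hx).elim h.1.of_mem_parts h.2.of_mem_parts

theorem UnitFree.connected_graph_of_mem_parts {x : Formula} :
    ∀ {φ : Formula}, φ.UnitFree → x ∈ φ.parts → x.graph.Connected
  | pos _, _, hx | neg _, _, hx => List.mem_singleton.mp hx ▸ connected_single _
  | tens _ _, h, hx =>
    have := h.1.nonempty_graph
    have := h.2.nonempty_graph
    List.mem_singleton.mp hx ▸ connected_tensor
  | par _ _, h, hx =>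
    (List.mem_append.mp hx).elim h.1.connected_graph_of_mem_parts h.2.connected_graph_of_mem_parts

theorem size_le_of_mem_parts {x : Formula} :
    ∀ {φ : Formula}, x ∈ φ.parts → x.size ≤ φ.size
  | unit, hx => nomatch hx
  | pos _, hx | neg _, hx | tens _ _, hx => (congrArg size (List.mem_singleton.mp hx)).le
  | par φ ψ, hx => by
    rcases List.mem_append.mp hx with hx | hx <;>
      · have := size_le_of_mem_parts hx
        simp only [size]
        omega

theorem size_lt_of_mem_parts_par {x φ ψ : Formula} (hx : x ∈ (par φ ψ).parts) :
    x.size < (par φ ψ).size := by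
  have := φ.size_pos
  have := ψ.size_pos
  rcases List.mem_append.mp hx with hx | hx <;>
    · have := size_le_of_mem_parts hx
      simp only [size]
      omega

theorem exists_perm_par_iso : ∀ (l : List Formula) (v : (listPar l).graph.V),
    ∃ φ l', l.Perm (φ :: l') ∧
      ∃ f : Iso (listPar l).graph (φ.graph.par (listPar l').graph), (f.toEquiv v).isLeft
  | φ :: l, .inl _ => ⟨φ, l, .refl _, .refl _, rfl⟩
  | φ :: l, .inr v => by
    obtain ⟨ψ, l', hl, f, hf⟩ := exists_perm_par_iso l v
    obtain ⟨w, hw⟩ := Sum.isLeft_iff.mp hf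
    refine ⟨ψ, φ :: l', (hl.cons φ).trans (.swap ψ φ l'),
      ((Iso.refl _).parCongr f).trans (Iso.parLeftComm _ _ _), ?_⟩
    show (Iso.parLeftComm _ _ _).toEquiv (.inr (f.toEquiv v)) |>.isLeft
    rw [hw]
    rfl

theorem listPar_equiv_of_iso : ∀ {l₁ l₂ : List Formula},
    (∀ φ ∈ l₁, φ.graph.Connected) → (∀ ψ ∈ l₂, ψ.graph.Connected) →
    (∀ φ ∈ l₁, ∀ ψ ∈ l₂, φ.graph.iso ψ.graph → φ.equiv ψ) →
    (listPar l₁).graph.iso (listPar l₂).graph → (listPar l₁).equiv (listPar l₂)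
  | [], [], _, _, _, _ => .refl _
  | [], ψ :: _, _, h₂, _, ⟨f⟩ =>
    (f.toEquiv.symm (.inl (h₂ ψ List.mem_cons_self).1.some) : Empty).elim
  | φ :: l₁, l₂, h₁, h₂, h, ⟨f⟩ => by
    obtain ⟨v⟩ := (h₁ φ List.mem_cons_self).1
    obtain ⟨ψ, l₂', hl₂, g, hg⟩ := exists_perm_par_iso l₂ (f.toEquiv (.inl v))
    have hsub : ∀ χ ∈ ψ :: l₂', χ ∈ l₂ := fun χ hχ => hl₂.mem_iff.mpr hχ
    obtain ⟨hφψ, hrest⟩ := (f.trans g).iso_of_par_of_connected (h₁ φ List.mem_cons_self)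
      (h₂ ψ (hsub ψ List.mem_cons_self)) hg
    have hl : (listPar l₁).equiv (listPar l₂') :=
      listPar_equiv_of_iso (fun χ hχ => h₁ χ (List.mem_cons_of_mem _ hχ))
        (fun χ hχ => h₂ χ (hsub χ (List.mem_cons_of_mem _ hχ)))
        (fun χ hχ χ' hχ' =>
          h χ (List.mem_cons_of_mem _ hχ) χ' (hsub χ' (List.mem_cons_of_mem _ hχ')))
        hrest
    exact ((h φ List.mem_cons_self ψ (hsub ψ List.mem_cons_self) hφψ).parCongr hl).trans
      (listPar_perm hl₂.symm)

theorem UnitFree.equiv_of_iso_of_parts {φ ψ : Formula} (hφ : φ.UnitFree) (hψ : ψ.UnitFree)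
    (h : φ.graph.iso ψ.graph)
    (hparts : ∀ x ∈ φ.parts, ∀ y ∈ ψ.parts, x.graph.iso y.graph → x.equiv y) :
    φ.equiv ψ :=
  have hlist := listPar_equiv_of_iso (fun _ => hφ.connected_graph_of_mem_parts)
    (fun _ => hψ.connected_graph_of_mem_parts) hparts
    (φ.equiv_listPar_parts.graph_iso.symm.trans (h.trans ψ.equiv_listPar_parts.graph_iso))
  φ.equiv_listPar_parts.trans (hlist.trans ψ.equiv_listPar_parts.symm)

def ofAtom : Atom → Formula
  | (a, true) => pos a
  | (a, false) => neg a

theorem UnitFree.eq_ofAtom_of_single_iso {ψ : Formula} (hψ : ψ.UnitFree) {l : Atom}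
    (h : (single l).iso ψ.graph) : ψ = ofAtom l := by
  obtain ⟨f⟩ := h
  cases ψ with
  | unit => exact hψ.elim
  | pos _ | neg _ => exact congrArg ofAtom (f.label_eq ())
  | par ψ₁ ψ₂ | tens ψ₁ ψ₂ =>
    obtain ⟨x⟩ := hψ.1.nonempty_graph
    obtain ⟨y⟩ := hψ.2.nonempty_graph
    exact absurd (f.toEquiv.symm.injective (Subsingleton.elim (α := Unit) _ _))
      (Sum.inl_ne_inr (a := x) (b := y))

theorem UnitFree.equiv_of_graph_iso : ∀ {φ ψ : Formula}, φ.UnitFree → ψ.UnitFree →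
    φ.graph.iso ψ.graph → φ.equiv ψ
  | pos _, _, _, hψ, h | neg _, _, _, hψ, h => by
    rw [hψ.eq_ofAtom_of_single_iso h]
    exact .refl _
  | par _ _, _, hφ, hψ, h => hφ.equiv_of_iso_of_parts hψ h fun _ hx _ hy =>
    (hφ.of_mem_parts hx).equiv_of_graph_iso (hψ.of_mem_parts hy)
  | tens φ₁ φ₂, ψ, hφ, hψ, h => by
    -- complementation exchanges `⅋` and `⊗`, so the dual of a tensor is handled as a par
    have hdual : (tens φ₁ φ₂).dual.graph.iso ψ.dual.graph :=
      (graph_dual _).trans (h.dual.trans (graph_dual _).symm)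
    have := hφ.dual.equiv_of_iso_of_parts hψ.dual hdual fun _ hx _ hy =>
      (hφ.dual.of_mem_parts hx).equiv_of_graph_iso (hψ.dual.of_mem_parts hy)
    simpa only [dual_dual] using this.dual
termination_by φ => φ.size
decreasing_by
  · exact size_lt_of_mem_parts_par hx
  · have := size_lt_of_mem_parts_par hx
    simp only [size, size_dual] at this ⊢
    omega

end Formula

/-- For all formulas `φ` and `ψ`, `φ ≡ ψ` if and only if the
graphs `[φ]` and `[ψ]` are isomorphic. -/
theorem formula_equiv_iff_graph_iso (φ ψ : Formula) :
    Formula.equiv φ ψ ↔ φ.graph.iso ψ.graph := by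
  refine ⟨Formula.equiv.graph_iso, fun h => ?_⟩
  rcases φ.equiv_unit_or_exists_unitFree with hφ | ⟨φ', uφ, hφ⟩ <;>
    rcases ψ.equiv_unit_or_exists_unitFree with hψ | ⟨ψ', uψ, hψ⟩
  · exact hφ.trans hψ.symm
  · exact absurd (hφ.symm.graph_iso.trans (h.trans hψ.graph_iso)) uψ.not_empty_iso
  · exact absurd (hψ.symm.graph_iso.trans (h.symm.trans hφ.graph_iso)) uφ.not_empty_iso
  · exact hφ.trans ((uφ.equiv_of_graph_iso uψ
      (hφ.symm.graph_iso.trans (h.trans hψ.graph_iso))).trans hψ.symm)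

end GSP
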